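/- Let A ∈ ℝ^{n×n}, B_u ∈ ℝ^{n×m}, C_e ∈ ℝ^{p×n}, D_eu ∈ ℝ^{p×m}, with Q := C_eᵀC_e, S := C_eᵀD_eu, and R := D_euᵀD_eu positive definite. Let X be a symmetric positive definite matrix with H := R + B_uᵀXB_u invertible satisfying the DARE 0 = X − AᵀXA − Q + (AᵀXB_u + S)H⁻¹(AᵀXB_u + S)ᵀ, and suppose Â₁₁ := A − B_uK_x is nonsingular, where K_x := H⁻¹(AᵀXB_u + S)ᵀ. Then for every real γ_J, the matrix Q̃ := γ_J² Â₁₁⁻¹(X⁻¹ − Â₁₁X⁻¹Â₁₁ᵀ − B_uH⁻¹B_uᵀ)Â₁₁^{−⊤} is symmetric positive semidefinite. -/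

import Mathlib

/-!
The optimal gain makes the closed loop an isometry. With `Â = A - Bu Kx` and
`Ĉ = Ce - Deu Kx`, the block matrix `M = [Â Bu; Ĉ Deu]` satisfies
`Mᵀ diag(X, 1) M = diag(X, H)`: the DARE gives the diagonal block `ÂᵀXÂ + ĈᵀĈ = X`, and the
definition of `Kx` makes the off-diagonal blocks vanish. For `P = diag(X, 1)` the matrix
`T = M diag(X, H)⁻¹ Mᵀ` then satisfies `T P T = T`, so `P⁻¹ - T = (P⁻¹ - T) P (P⁻¹ - T)` is
positive semidefinite. Its upper left block is `X⁻¹ - Â X⁻¹ Âᵀ - Bu H⁻¹ Buᵀ`, and `Q̃` is a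
nonnegative multiple of a congruence of that block.
-/

open Matrix

namespace Matrix

section Riccati

variable {R : Type*} [CommRing R] {n m p : Type*} [Fintype n] [Fintype m] [Fintype p]
  [DecidableEq m] {A X : Matrix n n R} {B : Matrix n m R} {C : Matrix p n R} {D : Matrix p m R}
  {H : Matrix m m R} {K : Matrix m n R}

theorem riccati_closedLoop_cross_eq_zero (hX : Xᵀ = X) (hH : H = Dᵀ * D + Bᵀ * X * B)
    (hHu : IsUnit H) (hK : K = H⁻¹ * (Aᵀ * X * B + Cᵀ * D)ᵀ) :
    Bᵀ * X * (A - B * K) + Dᵀ * (C - D * K) = 0 := by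
  have hHK : H * K = Bᵀ * X * A + Dᵀ * C := by
    rw [hK, mul_nonsing_inv_cancel_left _ _ ((isUnit_iff_isUnit_det H).mp hHu)]
    simp only [transpose_add, transpose_mul, transpose_transpose, hX, Matrix.mul_assoc]
  calc Bᵀ * X * (A - B * K) + Dᵀ * (C - D * K)
      = Bᵀ * X * A + Dᵀ * C - H * K := by
        simp only [hH, Matrix.mul_sub, Matrix.add_mul, Matrix.mul_assoc]; abel
    _ = 0 := by rw [hHK, sub_self]

theorem riccati_closedLoop_lyapunov (hX : Xᵀ = X) (hH : H = Dᵀ * D + Bᵀ * X * B)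
    (hHu : IsUnit H) (hK : K = H⁻¹ * (Aᵀ * X * B + Cᵀ * D)ᵀ)
    (hDARE : X - Aᵀ * X * A - Cᵀ * C +
      (Aᵀ * X * B + Cᵀ * D) * H⁻¹ * (Aᵀ * X * B + Cᵀ * D)ᵀ = 0) :
    (A - B * K)ᵀ * X * (A - B * K) + (C - D * K)ᵀ * (C - D * K) = X := by
  calc (A - B * K)ᵀ * X * (A - B * K) + (C - D * K)ᵀ * (C - D * K)
      = Aᵀ * X * A + Cᵀ * C - (Aᵀ * X * B + Cᵀ * D) * K
          - Kᵀ * (Bᵀ * X * (A - B * K) + Dᵀ * (C - D * K)) := by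
        simp only [transpose_sub, transpose_mul, Matrix.sub_mul, Matrix.mul_sub, Matrix.add_mul,
          Matrix.mul_add, Matrix.mul_assoc]
        abel
    _ = X := by
        rw [riccati_closedLoop_cross_eq_zero hX hH hHu hK, Matrix.mul_zero, sub_zero, hK,
          ← Matrix.mul_assoc, ← sub_eq_zero, ← neg_eq_zero, ← hDARE]
        abel

end Riccati

theorem inv_fromBlocks_zero {α m n : Type*} [CommRing α] [Fintype m] [Fintype n]
    [DecidableEq m] [DecidableEq n] {A : Matrix m m α} {D : Matrix n n α} (hA : IsUnit A)
    (hD : IsUnit D) : (fromBlocks A 0 0 D)⁻¹ = fromBlocks A⁻¹ 0 0 D⁻¹ := by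
  simp [inv_fromBlocks_zero₂₁_of_isUnit_iff A 0 D (iff_of_true hA hD)]

open scoped ComplexOrder in
theorem PosDef.fromBlocks_zero {𝕜 m n : Type*} [RCLike 𝕜] [Fintype m] [Fintype n]
    [DecidableEq m] [DecidableEq n] {A : Matrix m m 𝕜} {D : Matrix n n 𝕜} (hA : A.PosDef)
    (hD : D.PosDef) : (fromBlocks A 0 0 D).PosDef := by
  have := hA.isUnit.invertible
  have hpsd : (fromBlocks A 0 0ᴴ D).PosSemidef :=
    (PosDef.fromBlocks₁₁ 0 D hA).mpr (by simpa using hD.posSemidef)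
  rw [conjTranspose_zero] at hpsd
  exact hpsd.posDef_iff_isUnit.mpr (isUnit_fromBlocks_zero₂₁.mpr ⟨hA.isUnit, hD.isUnit⟩)

theorem PosDef.posSemidef_inv_sub_mul_inv_mul_transpose {ι κ : Type*} [Fintype ι] [Fintype κ]
    [DecidableEq ι] [DecidableEq κ] {P : Matrix ι ι ℝ} (hP : P.PosDef) {P' : Matrix κ κ ℝ}
    (hP' : IsUnit P') {M : Matrix ι κ ℝ} (hM : Mᵀ * P * M = P') :
    (P⁻¹ - M * P'⁻¹ * Mᵀ).PosSemidef := by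
  set T := M * P'⁻¹ * Mᵀ with hT
  have hPsymm : Pᵀ = P := hP.isHermitian.eq
  have hP'symm : P'ᵀ = P' := by
    rw [← hM, transpose_mul, transpose_mul, transpose_transpose, hPsymm, Matrix.mul_assoc]
  have hTsymm : Tᵀ = T := by
    rw [hT, transpose_mul, transpose_mul, transpose_transpose, transpose_nonsing_inv, hP'symm,
      Matrix.mul_assoc]
  have hTPT : T * P * T = T := by
    calc T * P * T = M * P'⁻¹ * (Mᵀ * P * M) * P'⁻¹ * Mᵀ := by
          simp only [hT, Matrix.mul_assoc]
      _ = T := by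
        rw [hM, nonsing_inv_mul_cancel_right _ _ ((isUnit_iff_isUnit_det P').mp hP')]
  have hPu := (isUnit_iff_isUnit_det P).mp hP.isUnit
  have hsq : P⁻¹ - T = (P⁻¹ - T)ᵀ * P * (P⁻¹ - T) := by
    rw [transpose_sub, hTsymm, transpose_nonsing_inv, hPsymm]
    simp only [Matrix.sub_mul, Matrix.mul_sub, nonsing_inv_mul _ hPu, Matrix.one_mul,
      Matrix.mul_assoc, mul_nonsing_inv _ hPu, Matrix.mul_one]
    rw [← Matrix.mul_assoc, hTPT]
    abel
  rw [hsq]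
  simpa using hP.posSemidef.conjTranspose_mul_mul_same (P⁻¹ - T)

theorem posSemidef_inv_sub_sub_of_blockIsometry {n m p : Type*} [Fintype n] [Fintype m]
    [Fintype p] [DecidableEq n] [DecidableEq m] [DecidableEq p] {X : Matrix n n ℝ}
    (hX : X.PosDef) {H : Matrix m m ℝ} (hH : IsUnit H) {A : Matrix n n ℝ} {B : Matrix n m ℝ}
    {C : Matrix p n ℝ} {D : Matrix p m ℝ} (hA : Aᵀ * X * A + Cᵀ * C = X)
    (hAB : Bᵀ * X * A + Dᵀ * C = 0) (hB : Bᵀ * X * B + Dᵀ * D = H) :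
    (X⁻¹ - A * X⁻¹ * Aᵀ - B * H⁻¹ * Bᵀ).PosSemidef := by
  have hBA : Aᵀ * X * B + Cᵀ * D = 0 := by
    have hXsymm : Xᵀ = X := hX.isHermitian.eq
    simpa [Matrix.mul_assoc, hXsymm] using congrArg transpose hAB
  have hgram :
      (fromBlocks A B C D)ᵀ * fromBlocks X 0 0 (1 : Matrix p p ℝ) * fromBlocks A B C D =
        fromBlocks X 0 0 H := by
    simp only [fromBlocks_transpose, fromBlocks_multiply, Matrix.mul_zero, Matrix.mul_one,
      add_zero, zero_add, hA, hAB, hBA, hB]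
  have hblock := (PosDef.fromBlocks_zero hX PosDef.one).posSemidef_inv_sub_mul_inv_mul_transpose
    (isUnit_fromBlocks_zero₂₁.mpr ⟨hX.isUnit, hH⟩) hgram
  rw [inv_fromBlocks_zero hX.isUnit isUnit_one, inv_fromBlocks_zero hX.isUnit hH] at hblock
  convert hblock.submatrix Sum.inl using 1
  ext i j
  simp [fromBlocks_transpose, fromBlocks_multiply, sub_sub]

end Matrix

theorem auxiliary_weight_psd_general
    (n m p : ℕ)
    (A : Matrix (Fin n) (Fin n) ℝ) (Bu : Matrix (Fin n) (Fin m) ℝ)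
    (Ce : Matrix (Fin p) (Fin n) ℝ) (Deu : Matrix (Fin p) (Fin m) ℝ)
    (Q : Matrix (Fin n) (Fin n) ℝ) (S : Matrix (Fin n) (Fin m) ℝ)
    (R : Matrix (Fin m) (Fin m) ℝ)
    (hQ : Q = Ceᵀ * Ce) (hS : S = Ceᵀ * Deu) (hR : R = Deuᵀ * Deu)
    (X : Matrix (Fin n) (Fin n) ℝ) (hXpd : X.PosDef)
    (H : Matrix (Fin m) (Fin m) ℝ) (hH : H = R + Buᵀ * X * Bu) (hHinv : IsUnit H)
    (hDARE : 0 = X - Aᵀ * X * A - Q +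
      (Aᵀ * X * Bu + S) * H⁻¹ * (Aᵀ * X * Bu + S)ᵀ)
    (Kx : Matrix (Fin m) (Fin n) ℝ) (hKx : Kx = H⁻¹ * (Aᵀ * X * Bu + S)ᵀ)
    (A11 : Matrix (Fin n) (Fin n) ℝ) (hA11 : A11 = A - Bu * Kx) :
    ∀ γJ : ℝ,
      (γJ ^ 2 •
        (A11⁻¹ * (X⁻¹ - A11 * X⁻¹ * A11ᵀ - Bu * H⁻¹ * Buᵀ) * (A11⁻¹)ᵀ)).PosSemidef := by
  intro γJ
  subst hQ hS hR hA11
  have hXsymm : Xᵀ = X := hXpd.isHermitian.eq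
  have hmiddle := posSemidef_inv_sub_sub_of_blockIsometry hXpd hHinv
    (riccati_closedLoop_lyapunov hXsymm hH hHinv hKx hDARE.symm)
    (riccati_closedLoop_cross_eq_zero hXsymm hH hHinv hKx) (by rw [hH, add_comm])
  simpa using (hmiddle.mul_mul_conjTranspose_same (A - Bu * Kx)⁻¹).smul (sq_nonneg γJ)

/-- The auxiliary state weighting `Q̃` appearing in the minimal-dimension
spectral factor construction is positive semidefinite. -/
theorem auxiliary_weight_psd
    (n m p : ℕ)
    (A : Matrix (Fin n) (Fin n) ℝ) (Bu : Matrix (Fin n) (Fin m) ℝ)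
    (Ce : Matrix (Fin p) (Fin n) ℝ) (Deu : Matrix (Fin p) (Fin m) ℝ)
    (Q : Matrix (Fin n) (Fin n) ℝ) (S : Matrix (Fin n) (Fin m) ℝ)
    (R : Matrix (Fin m) (Fin m) ℝ)
    (hQ : Q = Ceᵀ * Ce) (hS : S = Ceᵀ * Deu) (hR : R = Deuᵀ * Deu)
    (hRpd : R.PosDef)
    (X : Matrix (Fin n) (Fin n) ℝ) (hXpd : X.PosDef)
    (H : Matrix (Fin m) (Fin m) ℝ) (hH : H = R + Buᵀ * X * Bu) (hHinv : IsUnit H)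
    (hDARE : 0 = X - Aᵀ * X * A - Q +
      (Aᵀ * X * Bu + S) * H⁻¹ * (Aᵀ * X * Bu + S)ᵀ)
    (Kx : Matrix (Fin m) (Fin n) ℝ) (hKx : Kx = H⁻¹ * (Aᵀ * X * Bu + S)ᵀ)
    (A11 : Matrix (Fin n) (Fin n) ℝ) (hA11 : A11 = A - Bu * Kx)
    (hA11inv : IsUnit A11) :
    ∀ γJ : ℝ,
      (γJ ^ 2 •
        (A11⁻¹ * (X⁻¹ - A11 * X⁻¹ * A11ᵀ - Bu * H⁻¹ * Buᵀ) * (A11⁻¹)ᵀ)).PosSemidef :=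
  auxiliary_weight_psd_general n m p A Bu Ce Deu Q S R hQ hS hR X hXpd H hH hHinv hDARE Kx hKx A11
    hA11
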